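/- Let ξ_n be the random variable with P(ξ_n = k) = m_n(k)/C_n, where m_n(k) are the coefficients of the q-Catalan number C_n(q). Then the variance of ξ_n equals n(n-1)(n+1)/6. -/

import Mathlib

/-!
For a polynomial `p` with `p(1) ≠ 0`, the variance of the distribution `k ↦ coeff p k / p(1)` is
`p''(1)/p(1) + p'(1)/p(1) - (p'(1)/p(1))²`, the second derivative of `log p(eᵗ)` at `t = 0`;
hence it is additive over products. The coefficients of `[m]_q` are uniform on `{0, …, m-1}`, with
variance `(m² - 1)/12`, so `[m]_q!` has variance `m(m-1)(2m+5)/72`, and since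
`[n]_q!² [n+1]_q C_n(q) = [2n]_q!` the variance of `C_n(q)` is
`V([2n]_q!) - 2 V([n]_q!) - V([n+1]_q) = (n-1)n(n+1)/6`.
-/

open Polynomial Finset

noncomputable def qInt (m : ℕ) : Polynomial ℝ :=
  ∑ i ∈ Finset.range m, Polynomial.X ^ i

noncomputable def qFact (m : ℕ) : Polynomial ℝ :=
  ∏ i ∈ Finset.range m, qInt (i + 1)

namespace Polynomial

theorem ne_zero_of_eval_ne_zero {R : Type*} [Semiring R] {p : R[X]} {x : R} (h : p.eval x ≠ 0) :
    p ≠ 0 := by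
  rintro rfl
  exact h eval_zero

section Moments

variable {R : Type*} [CommSemiring R] {p : R[X]} {N : ℕ}

theorem sum_range_mul_coeff_eq_eval_derivative (hp : p.natDegree < N) :
    ∑ k ∈ range N, (k : R) * p.coeff k = (derivative p).eval 1 := by
  conv_rhs => rw [p.as_sum_range' N hp]
  simp [derivative_monomial, eval_finsetSum, mul_comm]

theorem sum_range_sq_mul_coeff_eq_eval_derivative (hp : p.natDegree < N) :
    ∑ k ∈ range N, (k : R) ^ 2 * p.coeff k
      = (derivative (derivative p)).eval 1 + (derivative p).eval 1 := by
  conv_rhs => rw [p.as_sum_range' N hp]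
  simp only [derivative_sum, derivative_monomial, eval_finsetSum, eval_monomial, one_pow,
    mul_one, ← sum_add_distrib]
  refine sum_congr rfl fun k _ => ?_
  rcases k with _ | k
  · simp
  · push_cast [Nat.add_sub_cancel]
    ring

end Moments

section GeneratingFunction

variable {K : Type*} [Field K] {p q : K[X]}

noncomputable def pgfMean (p : K[X]) : K :=
  (derivative p).eval 1 / p.eval 1

noncomputable def pgfVariance (p : K[X]) : K :=
  (derivative (derivative p)).eval 1 / p.eval 1 + p.pgfMean - p.pgfMean ^ 2

theorem pgfMean_mul (hp : p.eval 1 ≠ 0) (hq : q.eval 1 ≠ 0) :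
    (p * q).pgfMean = p.pgfMean + q.pgfMean := by
  simp only [pgfMean, derivative_mul, eval_add, eval_mul]
  field_simp

theorem pgfVariance_mul (hp : p.eval 1 ≠ 0) (hq : q.eval 1 ≠ 0) :
    (p * q).pgfVariance = p.pgfVariance + q.pgfVariance := by
  simp only [pgfVariance, pgfMean_mul hp hq]
  simp only [pgfMean, derivative_mul, derivative_add, eval_add, eval_mul]
  field_simp
  ring

theorem pgfVariance_pow (hp : p.eval 1 ≠ 0) (k : ℕ) : (p ^ k).pgfVariance = k * p.pgfVariance := by
  induction k with
  | zero => simp [pgfVariance, pgfMean]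
  | succ k ih =>
    rw [pow_succ, pgfVariance_mul (by rw [eval_pow]; exact pow_ne_zero k hp) hp, ih]
    push_cast
    ring

theorem pgfVariance_eq_sum_range {N : ℕ} (hp : p.natDegree < N) :
    p.pgfVariance = (∑ k ∈ range N, (k : K) ^ 2 * p.coeff k) / p.eval 1
      - ((∑ k ∈ range N, (k : K) * p.coeff k) / p.eval 1) ^ 2 := by
  rw [sum_range_sq_mul_coeff_eq_eval_derivative hp, sum_range_mul_coeff_eq_eval_derivative hp,
    pgfVariance, pgfMean, add_div]

end GeneratingFunction

end Polynomial

theorem qInt_succ (m : ℕ) : qInt (m + 1) = qInt m + X ^ m :=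
  sum_range_succ _ _

theorem eval_one_qInt (m : ℕ) : (qInt m).eval 1 = m := by
  simp [qInt]

theorem eval_one_qInt_succ_ne_zero (m : ℕ) : (qInt (m + 1)).eval 1 ≠ 0 := by
  rw [eval_one_qInt]
  positivity

theorem natDegree_qInt_succ (m : ℕ) : (qInt (m + 1)).natDegree = m := by
  induction m with
  | zero => simp [qInt]
  | succ m ih => rw [qInt_succ, natDegree_add_eq_right_of_natDegree_lt] <;> simp [ih]

theorem eval_one_derivative_qInt (m : ℕ) :
    (derivative (qInt m)).eval 1 = m * (m - 1) / 2 := by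
  induction m with
  | zero => simp [qInt]
  | succ m ih =>
    simp [qInt_succ, ih, derivative_X_pow]
    ring

theorem eval_one_derivative_derivative_qInt (m : ℕ) :
    (derivative (derivative (qInt m))).eval 1 = m * (m - 1) * (m - 2) / 3 := by
  induction m with
  | zero => simp [qInt]
  | succ m ih =>
    rcases m with _ | m
    · simp [qInt]
    · rw [qInt_succ, derivative_add, derivative_add, eval_add, ih]
      simp [derivative_X_pow]
      ring

theorem pgfVariance_qInt_succ (m : ℕ) : (qInt (m + 1)).pgfVariance = m * (m + 2) / 12 := by
  simp only [pgfVariance, pgfMean, eval_one_qInt, eval_one_derivative_qInt,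
    eval_one_derivative_derivative_qInt]
  field_simp
  push_cast
  ring

theorem qFact_succ (m : ℕ) : qFact (m + 1) = qFact m * qInt (m + 1) :=
  prod_range_succ _ _

theorem eval_one_qFact_pos (m : ℕ) : 0 < (qFact m).eval 1 := by
  rw [qFact, eval_prod]
  exact prod_pos fun i _ => by rw [eval_one_qInt]; positivity

theorem qFact_ne_zero (m : ℕ) : qFact m ≠ 0 :=
  ne_zero_of_eval_ne_zero (eval_one_qFact_pos m).ne'

theorem two_mul_natDegree_qFact_add (m : ℕ) : 2 * (qFact m).natDegree + m = m * m := by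
  induction m with
  | zero => simp [qFact]
  | succ m ih =>
    rw [qFact_succ, natDegree_mul (qFact_ne_zero m)
      (ne_zero_of_eval_ne_zero (eval_one_qInt_succ_ne_zero m)), natDegree_qInt_succ]
    linarith

theorem pgfVariance_qFact (m : ℕ) : (qFact m).pgfVariance = m * (m - 1) * (2 * m + 5) / 72 := by
  induction m with
  | zero => simp [qFact, pgfVariance, pgfMean]
  | succ m ih =>
    rw [qFact_succ, pgfVariance_mul (eval_one_qFact_pos m).ne' (eval_one_qInt_succ_ne_zero m), ih,
      pgfVariance_qInt_succ]
    push_cast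
    ring

theorem eval_one_qFact_sq_mul_qInt_ne_zero (n : ℕ) :
    (qFact n ^ 2 * qInt (n + 1)).eval 1 ≠ 0 := by
  rw [eval_mul, eval_pow]
  exact mul_ne_zero (pow_ne_zero 2 (eval_one_qFact_pos n).ne') (eval_one_qInt_succ_ne_zero n)

section QCatalan

variable {n : ℕ} {P : ℝ[X]}

theorem qCatalan_eval_one_ne_zero (hP : qFact n ^ 2 * qInt (n + 1) * P = qFact (2 * n)) :
    P.eval 1 ≠ 0 := fun h => (eval_one_qFact_pos (2 * n)).ne' <| by
  rw [← hP, eval_mul, h, mul_zero]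

theorem qCatalan_natDegree (hP : qFact n ^ 2 * qInt (n + 1) * P = qFact (2 * n)) :
    P.natDegree = n * (n - 1) := by
  have hdeg := congrArg natDegree hP
  rw [natDegree_mul (ne_zero_of_eval_ne_zero (eval_one_qFact_sq_mul_qInt_ne_zero n))
      (ne_zero_of_eval_ne_zero (qCatalan_eval_one_ne_zero hP)),
    natDegree_mul (pow_ne_zero 2 (qFact_ne_zero n))
      (ne_zero_of_eval_ne_zero (eval_one_qInt_succ_ne_zero n)),
    natDegree_pow, natDegree_qInt_succ] at hdeg
  have hn := two_mul_natDegree_qFact_add n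
  have h2n := two_mul_natDegree_qFact_add (2 * n)
  have : 2 * n * (2 * n) = 4 * (n * n) := by ring
  rw [Nat.mul_sub_one]
  omega

theorem qCatalan_pgfVariance (hP : qFact n ^ 2 * qInt (n + 1) * P = qFact (2 * n)) :
    P.pgfVariance = n * (n - 1) * (n + 1) / 6 := by
  have hvar := congrArg pgfVariance hP
  rw [pgfVariance_mul (eval_one_qFact_sq_mul_qInt_ne_zero n) (qCatalan_eval_one_ne_zero hP),
    pgfVariance_mul (by rw [eval_pow]; exact pow_ne_zero 2 (eval_one_qFact_pos n).ne')
      (eval_one_qInt_succ_ne_zero n),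
    pgfVariance_pow (eval_one_qFact_pos n).ne', pgfVariance_qFact, pgfVariance_qFact,
    pgfVariance_qInt_succ] at hvar
  push_cast at hvar
  linear_combination hvar

end QCatalan

theorem qCatalan_variance_general (n : ℕ) (P : Polynomial ℝ)
    (hP : qFact n ^ 2 * qInt (n + 1) * P = qFact (2 * n)) :
    (∑ k ∈ Finset.range (n * (n - 1) + 1), (k : ℝ) ^ 2 * P.coeff k) / P.eval 1
      - ((∑ k ∈ Finset.range (n * (n - 1) + 1), (k : ℝ) * P.coeff k) / P.eval 1) ^ 2
      = (n : ℝ) * ((n : ℝ) - 1) * ((n : ℝ) + 1) / 6 := by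
  have hdeg : P.natDegree < n * (n - 1) + 1 := by
    rw [qCatalan_natDegree hP]
    exact Nat.lt_succ_self _
  rw [← pgfVariance_eq_sum_range hdeg, qCatalan_pgfVariance hP]

/-- The variance of the random variable $ξ_n$ distributed according to the
coefficients of the q-Catalan number equals $n(n-1)(n+1)/6$. -/
theorem qCatalan_variance (n : ℕ) (hn : 1 ≤ n) (P : Polynomial ℝ)
    (hP : qFact n ^ 2 * qInt (n + 1) * P = qFact (2 * n)) :
    (∑ k ∈ Finset.range (n * (n - 1) + 1), (k : ℝ) ^ 2 * P.coeff k) / P.eval 1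
      - ((∑ k ∈ Finset.range (n * (n - 1) + 1), (k : ℝ) * P.coeff k) / P.eval 1) ^ 2
      = (n : ℝ) * ((n : ℝ) - 1) * ((n : ℝ) + 1) / 6 :=
  qCatalan_variance_general n P hP
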